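/- Let f be an entire function whose Maclaurin coefficients a_n are all real, and assume: (positivity) there is r₀ > 0 with f(r) > 0 for all real r ≥ r₀; let a(r) := r f′(r)/f(r) and b(r) := r a′(r) for r ≥ r₀; (capture) b(r) → ∞ as r → ∞; (locality) there is a function θ₀ : ℝ → ℝ with 0 < θ₀(r) < π for r ≥ r₀ such that the supremum over real θ with |θ| ≤ θ₀(r) of |f(r e^{iθ}) · e^{−iθ a(r) + θ² b(r)/2} / f(r) − 1| tends to 0 as r → ∞; (decay) the supremum over real θ with θ₀(r) ≤ |θ| ≤ π of √(b(r)) · |f(r e^{iθ})| / f(r) tends to 0 as r → ∞. Then there is N ∈ ℕ such that for every n ≥ N the equation a(r) = n has a unique solution r_n in (r₀, ∞); moreover r_n → ∞ as n → ∞, and the Stirling-type formula holds: a_n · r_n^n · √(2π b(r_n)) / f(r_n) → 1 as n → ∞. -/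

import Mathlib

open Real Filter MeasureTheory intervalIntegral Topology Set
open scoped Complex
open Complex (I)

/-!
Since `B = r A'(r) → ∞`, eventually `A' ≥ 1 / r`, so `A - log` is eventually increasing; hence `A`
is eventually strictly increasing and unbounded, which yields the unique solutions `r_n → ∞` of
`A(r) = n`. For the asymptotics, Cauchy's formula reads
`2π a_n r^n = ∫_{-π}^{π} f(r e^{iθ}) e^{-inθ} dθ`. At `r = r_n` locality replaces the integrand on
`|θ| ≤ θ₀` by the Gaussian `f(r) e^{-θ² b / 2}`, while decay makes the rest `o(f(r) / √b)`.
Comparing the two conditions at `θ = θ₀` shows `θ₀ √b → ∞`, so the Gaussian integral over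
`[-θ₀, θ₀]` is `(√(2π) + o(1)) / √b`.
-/

theorem hasFPowerSeriesOnBall_ofScalars_of_forall_hasSum {𝕜 : Type*} [RCLike 𝕜]
    {c : ℕ → 𝕜} {g : 𝕜 → 𝕜} (hg : ∀ z, HasSum (fun n => c n * z ^ n) (g z)) :
    HasFPowerSeriesOnBall g (FormalMultilinearSeries.ofScalars 𝕜 c) 0 ⊤ := by
  have hradius : (FormalMultilinearSeries.ofScalars 𝕜 c).radius = ⊤ := by
    refine ENNReal.eq_top_of_forall_nnreal_le fun r => ?_
    refine FormalMultilinearSeries.le_radius_of_tendsto _ (l := 0) ?_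
    simpa [FormalMultilinearSeries.ofScalars_norm] using
      (hg ((r : ℝ) : 𝕜)).summable.tendsto_atTop_zero.norm
  refine ⟨by simp [hradius], ENNReal.zero_lt_top, fun {y} _ => ?_⟩
  simpa [FormalMultilinearSeries.ofScalars_apply_eq, mul_comm] using hg y

theorem integral_cexp_int_mul_I (k : ℤ) :
    ∫ θ in -π..π, cexp (k * I * θ) = if k = 0 then (2 * π : ℂ) else 0 := by
  split_ifs with hk
  · simp [hk]; ring
  · have hkI : (k : ℂ) * I ≠ 0 := by simp [hk]
    rw [integral_exp_mul_complex hkI, div_eq_zero_iff, sub_eq_zero]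
    left
    -- `e^{kπi}` is its own inverse, its square being `e^{2kπi} = 1`
    have h := Complex.exp_int_mul_two_pi_mul_I k
    rw [show (k : ℂ) * (2 * π * I) = k * I * π + k * I * π by ring, Complex.exp_add] at h
    push_cast
    rw [mul_neg, Complex.exp_neg]
    exact eq_inv_of_mul_eq_one_left h

theorem integral_mul_cexp_neg_eq_coeff {c : ℕ → ℂ} {f : ℂ → ℂ}
    (hf : HasFPowerSeriesOnBall f (FormalMultilinearSeries.ofScalars ℂ c) 0 ⊤) (r : ℝ) (n : ℕ) :
    ∫ θ in -π..π, f (r * cexp (θ * I)) * cexp (-(n * θ * I)) = 2 * π * c n * r ^ n := by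
  set F : ℕ → ℝ → ℂ := fun m θ => c m * r ^ m * cexp ((m - n : ℤ) * I * θ)
  have hF : ∀ m θ, F m θ = c m * (r * cexp (θ * I)) ^ m * cexp (-(n * θ * I)) := by
    intro m θ
    simp only [F, mul_pow, ← Complex.exp_nat_mul, mul_assoc, ← Complex.exp_add]
    push_cast
    ring_nf
  have hsum : HasSum (fun m => ∫ θ in -π..π, F m θ)
      (∫ θ in -π..π, f (r * cexp (θ * I)) * cexp (-(n * θ * I))) := by
    refine hasSum_integral_of_dominated_convergence (fun m _ => ‖c m‖ * ‖(r : ℂ)‖ ^ m)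
      (fun m => (by fun_prop : Continuous (F m)).aestronglyMeasurable) (fun m => ?_)
      (ae_of_all _ fun _ _ => ?_) intervalIntegrable_const (ae_of_all _ fun θ _ => ?_)
    · refine ae_of_all _ fun θ _ => le_of_eq ?_
      simp [F, Complex.norm_exp]
    · have := FormalMultilinearSeries.summable_norm_mul_pow (r := ‖(r : ℂ)‖₊) _
        (ENNReal.coe_lt_top.trans_le hf.r_le)
      simpa using this
    · simp only [hF]
      refine HasSum.mul_right _ ?_
      simpa [FormalMultilinearSeries.ofScalars_apply_eq, mul_comm] using
        hf.hasSum (y := r * cexp (θ * I)) (by simp)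
  have hterm : ∀ m, ∫ θ in -π..π, F m θ = if m = n then 2 * π * c n * r ^ n else 0 := by
    intro m
    rw [intervalIntegral.integral_const_mul, integral_cexp_int_mul_I]
    simp only [sub_eq_zero, Nat.cast_inj]
    split_ifs with h
    · subst h; ring
    · rw [mul_zero]
  simp only [hterm] at hsum
  exact hsum.unique (hasSum_ite_eq n _)

theorem integrable_exp_neg_sq_div_two : Integrable fun u : ℝ => rexp (-(u ^ 2 / 2)) := by
  simpa [neg_div, div_eq_inv_mul] using integrable_exp_neg_mul_sq (b := 1 / 2) (by norm_num)

theorem integral_exp_neg_sq_div_two : ∫ u : ℝ, rexp (-(u ^ 2 / 2)) = √(2 * π) := by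
  have := integral_gaussian (1 / 2)
  simp only [one_div, div_inv_eq_mul] at this
  simpa [neg_div, div_eq_inv_mul, mul_comm] using this

theorem integral_exp_neg_sq_div_two_symm_le (c : ℝ) :
    ∫ u in -c..c, rexp (-(u ^ 2 / 2)) ≤ √(2 * π) := by
  rcases le_total (-c) c with h | h
  · rw [integral_of_le h, ← integral_exp_neg_sq_div_two]
    exact setIntegral_le_integral integrable_exp_neg_sq_div_two
      (ae_of_all _ fun u => (exp_pos _).le)
  · rw [integral_symm]
    exact (neg_nonpos.2 (integral_nonneg_of_forall h fun u => (exp_pos _).le)).trans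
      (sqrt_nonneg _)

theorem tendsto_integral_exp_neg_sq_div_two_symm :
    Tendsto (fun c => ∫ u in -c..c, rexp (-(u ^ 2 / 2))) atTop (𝓝 √(2 * π)) :=
  integral_exp_neg_sq_div_two ▸
    intervalIntegral_tendsto_integral integrable_exp_neg_sq_div_two tendsto_neg_atTop_atBot
      tendsto_id

theorem sqrt_mul_integral_exp_neg_sq_mul_div_two {b : ℝ} (hb : 0 < b) (t : ℝ) :
    √b * ∫ θ in -t..t, rexp (-(θ ^ 2 * b / 2)) = ∫ u in -(t * √b)..t * √b, rexp (-(u ^ 2 / 2)) := by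
  have hsb : √b ≠ 0 := (sqrt_pos.2 hb).ne'
  have := intervalIntegral.integral_comp_mul_right (fun u => rexp (-(u ^ 2 / 2))) hsb
    (a := -t) (b := t)
  simp only [mul_pow, sq_sqrt hb.le, neg_mul, smul_eq_mul] at this
  rw [this, mul_inv_cancel_left₀ hsb]

theorem norm_integral_sub_mul_integral_gaussian_le {φ : ℝ → ℂ} (hφ : Continuous φ)
    {F b t ε : ℝ} (hF : 0 < F) (hb : 0 < b) (ht : 0 ≤ t) (htπ : t ≤ π)
    (hcenter : ∀ θ, |θ| ≤ t → ‖φ θ * rexp (θ ^ 2 * b / 2) / F - 1‖ ≤ ε)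
    (htail : ∀ θ, t ≤ |θ| → |θ| ≤ π → √b * ‖φ θ‖ / F ≤ ε) :
    ‖(∫ θ in -π..π, φ θ) - ((F * ∫ θ in -t..t, rexp (-(θ ^ 2 * b / 2)) : ℝ) : ℂ)‖ ≤
      ε * F * (2 * π / √b + ∫ θ in -t..t, rexp (-(θ ^ 2 * b / 2))) := by
  set G := ∫ θ in -t..t, rexp (-(θ ^ 2 * b / 2))
  set ψ : ℝ → ℂ := fun θ => ((F * rexp (-(θ ^ 2 * b / 2)) : ℝ) : ℂ)
  have hsb : 0 < √b := sqrt_pos.2 hb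
  have hψ : Continuous ψ := by fun_prop
  have htail' : ∀ θ, t ≤ |θ| → |θ| ≤ π → ‖φ θ‖ ≤ ε * F / √b := fun θ h₁ h₂ => by
    rw [le_div_iff₀ hsb, mul_comm]
    exact (div_le_iff₀ hF).1 (htail θ h₁ h₂)
  have hcenter' : ∀ θ ∈ Set.Ioc (-t) t, ‖φ θ - ψ θ‖ ≤ ε * F * rexp (-(θ ^ 2 * b / 2)) := by
    rintro θ ⟨h₁, h₂⟩
    have hψ_mul : ψ θ * (rexp (θ ^ 2 * b / 2) / F) = 1 := by
      have : F * rexp (-(θ ^ 2 * b / 2)) * (rexp (θ ^ 2 * b / 2) / F) = 1 := by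
        rw [exp_neg]; field_simp
      simp only [ψ]
      exact_mod_cast this
    have hψ_norm : ‖ψ θ‖ = F * rexp (-(θ ^ 2 * b / 2)) := by
      rw [Complex.norm_real, norm_eq_abs, abs_of_pos (by positivity)]
    calc ‖φ θ - ψ θ‖ = ‖ψ θ‖ * ‖φ θ * rexp (θ ^ 2 * b / 2) / F - 1‖ := by
          rw [← norm_mul]
          congr 1
          linear_combination (-φ θ) * hψ_mul
      _ ≤ F * rexp (-(θ ^ 2 * b / 2)) * ε := by
          rw [hψ_norm]
          exact mul_le_mul_of_nonneg_left (hcenter θ (abs_le.2 ⟨h₁.le, h₂⟩)) (by positivity)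
      _ = ε * F * rexp (-(θ ^ 2 * b / 2)) := by ring
  have hleft : ‖∫ θ in -π..-t, φ θ‖ ≤ ε * F / √b * (π - t) := by
    refine (intervalIntegral.norm_integral_le_of_norm_le_const (C := ε * F / √b)
      fun θ hθ => ?_).trans_eq ?_
    · rw [Set.uIoc_of_le (by linarith)] at hθ
      exact htail' θ (by rw [abs_of_nonpos (by linarith [hθ.2])]; linarith [hθ.2])
        (by rw [abs_of_nonpos (by linarith [hθ.2])]; linarith [hθ.1])
    · rw [abs_of_nonneg (by linarith)]; ring
  have hright : ‖∫ θ in t..π, φ θ‖ ≤ ε * F / √b * (π - t) := by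
    refine (intervalIntegral.norm_integral_le_of_norm_le_const (C := ε * F / √b)
      fun θ hθ => ?_).trans_eq ?_
    · rw [Set.uIoc_of_le htπ] at hθ
      exact htail' θ (by rw [abs_of_pos (by linarith [hθ.1])]; linarith [hθ.1])
        (by rw [abs_of_pos (by linarith [hθ.1])]; linarith [hθ.2])
    · rw [abs_of_nonneg (by linarith)]
  have hmiddle : ‖(∫ θ in -t..t, φ θ) - ((F * G : ℝ) : ℂ)‖ ≤ ε * F * G := by
    have hψG : ∫ θ in -t..t, ψ θ = ((F * G : ℝ) : ℂ) := by
      rw [intervalIntegral.integral_ofReal, intervalIntegral.integral_const_mul]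
    rw [← hψG, ← integral_sub (hφ.intervalIntegrable _ _) (hψ.intervalIntegrable _ _),
      ← intervalIntegral.integral_const_mul]
    exact intervalIntegral.norm_integral_le_of_norm_le (by linarith) (ae_of_all _ hcenter')
      ((by fun_prop : Continuous _).intervalIntegrable _ _)
  have hsplit : (∫ θ in -π..π, φ θ) - ((F * G : ℝ) : ℂ) = (∫ θ in -π..-t, φ θ) +
      ((∫ θ in -t..t, φ θ) - ((F * G : ℝ) : ℂ)) + ∫ θ in t..π, φ θ := by
    rw [← integral_add_adjacent_intervals (hφ.intervalIntegrable (-π) t)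
      (hφ.intervalIntegrable t π), ← integral_add_adjacent_intervals
      (hφ.intervalIntegrable (-π) (-t)) (hφ.intervalIntegrable (-t) t)]
    ring
  calc _ ≤ ε * F / √b * (π - t) + ε * F * G + ε * F / √b * (π - t) := by
        rw [hsplit]
        exact (norm_add₃_le).trans (add_le_add_three hleft hmiddle hright)
    _ ≤ _ := by
        have hε : 0 ≤ ε := (by positivity : 0 ≤ √b * ‖φ π‖ / F).trans
          (htail π (by rwa [abs_of_pos pi_pos]) (abs_of_pos pi_pos).le)
        have : ε * F * (2 * π / √b) = 2 * π * (ε * F / √b) := by ring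
        nlinarith [mul_nonneg (by positivity : 0 ≤ ε * F / √b) ht]

theorem abs_coeff_mul_pow_sub_integral_gaussian_le {coef : ℕ → ℝ} {f : ℂ → ℂ}
    (hf : HasFPowerSeriesOnBall f (FormalMultilinearSeries.ofScalars ℂ fun n => (coef n : ℂ)) 0 ⊤)
    {r F b t ε : ℝ} {n : ℕ} (hF : 0 < F) (hb : 0 < b) (ht : 0 ≤ t) (htπ : t ≤ π)
    (hcenter : ∀ θ : ℝ, |θ| ≤ t →
      ‖f (r * cexp (θ * I)) *
          cexp (((-(θ * n) : ℝ) : ℂ) * I + ((θ ^ 2 * b / 2 : ℝ) : ℂ)) / ((F : ℝ) : ℂ) - 1‖ ≤ ε)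
    (htail : ∀ θ : ℝ, t ≤ |θ| → |θ| ≤ π → √b * ‖f (r * cexp (θ * I))‖ / F ≤ ε) :
    |2 * π * (coef n * r ^ n) * √b / F - ∫ u in -(t * √b)..t * √b, rexp (-(u ^ 2 / 2))| ≤
      ε * (2 * π + √(2 * π)) := by
  have hfc : Continuous f :=
    continuous_iff_continuousAt.2 fun z => (hf.analyticAt_of_mem (by simp)).continuousAt
  set φ : ℝ → ℂ := fun θ => f (r * cexp (θ * I)) * cexp (-(n * θ * I))
  have hφ : ∀ θ : ℝ, φ θ * rexp (θ ^ 2 * b / 2) = f (r * cexp (θ * I)) *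
      cexp (((-(θ * n) : ℝ) : ℂ) * I + ((θ ^ 2 * b / 2 : ℝ) : ℂ)) := fun θ => by
    simp only [φ, Complex.exp_add, Complex.ofReal_exp, mul_assoc]
    push_cast
    ring_nf
  have hsaddle := norm_integral_sub_mul_integral_gaussian_le (φ := φ) (by fun_prop) hF hb ht htπ
    (fun θ hθ => hφ θ ▸ hcenter θ hθ)
    (fun θ h₁ h₂ => by simpa [φ, Complex.norm_exp] using htail θ h₁ h₂)
  rw [integral_mul_cexp_neg_eq_coeff hf r n, show 2 * π * (coef n : ℂ) * r ^ n =
    ((2 * π * (coef n * r ^ n) : ℝ) : ℂ) by push_cast; ring, ← Complex.ofReal_sub,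
    Complex.norm_real, norm_eq_abs] at hsaddle
  have hε : 0 ≤ ε := (by positivity : 0 ≤ √b * ‖f (r * cexp (π * I))‖ / F).trans
    (htail π (by rwa [abs_of_pos pi_pos]) (abs_of_pos pi_pos).le)
  have hK := integral_exp_neg_sq_div_two_symm_le (t * √b)
  rw [← sqrt_mul_integral_exp_neg_sq_mul_div_two hb] at hK ⊢
  set G := ∫ θ in -t..t, rexp (-(θ ^ 2 * b / 2))
  calc _ = √b / F * |2 * π * (coef n * r ^ n) - F * G| := by
        rw [← abs_of_pos (by positivity : 0 < √b / F), ← abs_mul]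
        congr 1
        field_simp
    _ ≤ √b / F * (ε * F * (2 * π / √b + G)) := by gcongr
    _ = ε * (2 * π + √b * G) := by field_simp
    _ ≤ ε * (2 * π + √(2 * π)) := by gcongr

theorem monotoneOn_sub_log_of_one_le_mul_deriv {A : ℝ → ℝ} {R : ℝ} (hR : 0 < R)
    (hA : ∀ x, R ≤ x → DifferentiableAt ℝ A x) (h : ∀ x, R ≤ x → 1 ≤ x * deriv A x) :
    MonotoneOn (fun x => A x - log x) (Ici R) := by
  have hd : ∀ x, R ≤ x → HasDerivAt (fun x => A x - log x) (deriv A x - x⁻¹) x := fun x hx =>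
    (hA x hx).hasDerivAt.sub (hasDerivAt_log (by linarith))
  refine monotoneOn_of_deriv_nonneg (convex_Ici R)
    (fun x hx => (hd x hx).continuousAt.continuousWithinAt)
    (fun x hx => (hd x (interior_subset hx)).differentiableAt.differentiableWithinAt)
    fun x hx => ?_
  have hx : R < x := by simpa using hx
  rw [(hd x hx.le).deriv, sub_nonneg, inv_le_iff_one_le_mul₀' (by linarith)]
  exact h x hx.le

theorem strictMonoOn_of_monotoneOn_sub_log {A : ℝ → ℝ} {R : ℝ} (hR : 0 < R)
    (h : MonotoneOn (fun x => A x - log x) (Ici R)) : StrictMonoOn A (Ici R) :=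
  fun x hx y hy hxy => by
    have := h hx hy hxy.le
    have := log_lt_log (hR.trans_le hx) hxy
    simp only at *
    linarith

theorem tendsto_atTop_of_monotoneOn_sub_log {A : ℝ → ℝ} {R : ℝ}
    (h : MonotoneOn (fun x => A x - log x) (Ici R)) : Tendsto A atTop atTop := by
  refine tendsto_atTop_mono' _ ?_
    (tendsto_log_atTop.atTop_add (tendsto_const_nhds (x := A R - log R)))
  filter_upwards [eventually_ge_atTop R] with x hx
  have := h self_mem_Ici hx hx
  simp only at this
  linarith

theorem exists_seq_eq_natCast_of_strictMonoOn {A : ℝ → ℝ} {r₀ R : ℝ} (hr₀R : r₀ ≤ R)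
    (hcont : ContinuousOn A (Ici r₀)) (hmono : StrictMonoOn A (Ici R))
    (htop : Tendsto A atTop atTop) :
    ∃ (N : ℕ) (rn : ℕ → ℝ), (∀ n : ℕ, N ≤ n →
        r₀ < rn n ∧ A (rn n) = n ∧ ∀ r : ℝ, r₀ < r → A r = n → r = rn n) ∧
      Tendsto rn atTop atTop := by
  obtain ⟨M, hM⟩ := (isCompact_Icc (a := r₀) (b := R)).bddAbove_image
    (hcont.mono Icc_subset_Ici_self)
  set N := ⌈M⌉₊ + 1
  have hMN : ∀ n : ℕ, N ≤ n → M < n := fun n hn =>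
    (Nat.le_ceil M).trans_lt (by exact_mod_cast Nat.lt_of_lt_of_le (Nat.lt_succ_self _) hn)
  have hbig : ∀ n : ℕ, N ≤ n → ∀ r, r₀ ≤ r → A r = n → R < r := fun n hn r hr hAr => by
    by_contra! hrR
    exact (hMN n hn).not_ge (hAr ▸ hM ⟨r, ⟨hr, hrR⟩, rfl⟩)
  have hex : ∀ n : ℕ, ∃ c, N ≤ n → R < c ∧ A c = n := fun n => by
    by_cases hn : N ≤ n
    · obtain ⟨x, hx, hRx⟩ := ((htop.eventually_ge_atTop (n : ℝ)).and (eventually_ge_atTop R)).exists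
      obtain ⟨c, hc, hAc⟩ := intermediate_value_Icc hRx
        (hcont.mono fun y hy => hr₀R.trans hy.1)
        ⟨(hM ⟨R, ⟨hr₀R, le_rfl⟩, rfl⟩).trans (hMN n hn).le, hx⟩
      exact ⟨c, fun _ => ⟨hbig n hn c (hr₀R.trans hc.1) hAc, hAc⟩⟩
    · exact ⟨0, fun h => absurd h hn⟩
  choose rn hrn using hex
  refine ⟨N, rn, fun n hn => ⟨hr₀R.trans_lt (hrn n hn).1, (hrn n hn).2, fun r hr hAr => ?_⟩, ?_⟩
  · exact hmono.injOn (hbig n hn r hr.le hAr).le (hrn n hn).1.le (hAr.trans (hrn n hn).2.symm)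
  · refine tendsto_atTop.2 fun X => ?_
    filter_upwards [eventually_ge_atTop N, tendsto_natCast_atTop_atTop.eventually_gt_atTop
      (A (max X R))] with n hn hAn
    by_contra! hlt
    have := hmono (hrn n hn).1.le (le_max_right X R) (hlt.trans_le (le_max_left X R))
    rw [(hrn n hn).2] at this
    linarith

theorem tendsto_mul_sqrt_atTop_of_local_of_decay {f : ℂ → ℂ} {F A B θ₀ : ℝ → ℝ} {r₀ : ℝ}
    (hpos : ∀ r : ℝ, r₀ ≤ r → 0 < F r) (hθ₀ : ∀ r : ℝ, r₀ ≤ r → 0 < θ₀ r ∧ θ₀ r < π)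
    (hcap : Tendsto B atTop atTop)
    (hloc : ∀ ε : ℝ, 0 < ε → ∃ R : ℝ, ∀ r : ℝ, R ≤ r → ∀ θ : ℝ, |θ| ≤ θ₀ r →
      ‖f (r * cexp (θ * I)) *
          cexp (((-(θ * A r) : ℝ) : ℂ) * I + ((θ ^ 2 * B r / 2 : ℝ) : ℂ)) /
          ((F r : ℝ) : ℂ) - 1‖ ≤ ε)
    (hdec : ∀ ε : ℝ, 0 < ε → ∃ R : ℝ, ∀ r : ℝ, R ≤ r → ∀ θ : ℝ, θ₀ r ≤ |θ| → |θ| ≤ π →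
      √(B r) * ‖f (r * cexp (θ * I))‖ / F r ≤ ε) :
    Tendsto (fun r => θ₀ r * √(B r)) atTop atTop := by
  refine tendsto_atTop.2 fun C => ?_
  obtain ⟨Rl, hl⟩ := hloc (1 / 2) (by norm_num)
  obtain ⟨Rd, hd⟩ := hdec (rexp (-(C ^ 2 / 2)) / 2) (by positivity)
  filter_upwards [eventually_ge_atTop Rl, eventually_ge_atTop Rd, eventually_ge_atTop r₀,
    hcap.eventually_ge_atTop 1] with r hrl hrd hr₀ hB
  obtain ⟨ht, htπ⟩ := hθ₀ r hr₀
  have hF := hpos r hr₀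
  set t := θ₀ r
  set w := f (r * cexp (t * I))
  have habs : |t| = t := abs_of_pos ht
  -- at the boundary angle `t`, locality forces `‖w‖ e^{t²B/2} ≳ F` while decay forces `‖w‖ ≪ F`
  have hlow : 1 / 2 ≤ ‖w‖ / F r * rexp (t ^ 2 * B r / 2) := by
    have h := (norm_sub_norm_le _ _).trans ((norm_sub_rev _ _).trans_le (hl r hrl t habs.le))
    simp only [norm_one, norm_div, norm_mul, Complex.norm_exp, Complex.norm_real, norm_eq_abs,
      abs_of_pos hF, Complex.add_re, Complex.mul_I_re, Complex.ofReal_im, Complex.ofReal_re,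
      neg_zero, zero_add] at h
    rw [div_mul_eq_mul_div]
    linarith
  have hup : ‖w‖ / F r ≤ rexp (-(C ^ 2 / 2)) / 2 := by
    refine le_trans ?_ (hd r hrd t habs.ge (by rw [habs]; exact htπ.le))
    rw [mul_div_assoc]
    exact le_mul_of_one_le_left (by positivity) (one_le_sqrt.2 hB)
  have hsq : C ^ 2 ≤ (t * √(B r)) ^ 2 := by
    rw [mul_pow, sq_sqrt (by linarith)]
    have := hlow.trans (mul_le_mul_of_nonneg_right hup (exp_pos _).le)
    rw [div_mul_eq_mul_div, ← exp_add] at this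
    have := one_le_exp_iff.1 (by linarith)
    linarith
  exact (le_abs_self C).trans ((sq_le_sq.1 hsq).trans_eq (abs_of_nonneg (by positivity)))

theorem tendsto_coeff_mul_pow_mul_sqrt_div {coef : ℕ → ℝ} {f : ℂ → ℂ}
    (hf : HasFPowerSeriesOnBall f (FormalMultilinearSeries.ofScalars ℂ fun n => (coef n : ℂ)) 0 ⊤)
    {F A B θ₀ : ℝ → ℝ} {r₀ : ℝ}
    (hpos : ∀ r : ℝ, r₀ ≤ r → 0 < F r) (hθ₀ : ∀ r : ℝ, r₀ ≤ r → 0 < θ₀ r ∧ θ₀ r < π)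
    (hcap : Tendsto B atTop atTop)
    (hloc : ∀ ε : ℝ, 0 < ε → ∃ R : ℝ, ∀ r : ℝ, R ≤ r → ∀ θ : ℝ, |θ| ≤ θ₀ r →
      ‖f (r * cexp (θ * I)) *
          cexp (((-(θ * A r) : ℝ) : ℂ) * I + ((θ ^ 2 * B r / 2 : ℝ) : ℂ)) /
          ((F r : ℝ) : ℂ) - 1‖ ≤ ε)
    (hdec : ∀ ε : ℝ, 0 < ε → ∃ R : ℝ, ∀ r : ℝ, R ≤ r → ∀ θ : ℝ, θ₀ r ≤ |θ| → |θ| ≤ π →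
      √(B r) * ‖f (r * cexp (θ * I))‖ / F r ≤ ε)
    {rn : ℕ → ℝ} (hrn : Tendsto rn atTop atTop) (hA : ∀ᶠ n in atTop, A (rn n) = n) :
    Tendsto (fun n => coef n * rn n ^ n * √(2 * π * B (rn n)) / F (rn n)) atTop (𝓝 1) := by
  set x : ℕ → ℝ := fun n => 2 * π * (coef n * rn n ^ n) * √(B (rn n)) / F (rn n)
  set K : ℕ → ℝ := fun n => ∫ u in -(θ₀ (rn n) * √(B (rn n)))..θ₀ (rn n) * √(B (rn n)),
    rexp (-(u ^ 2 / 2))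
  have hK : Tendsto K atTop (𝓝 √(2 * π)) := tendsto_integral_exp_neg_sq_div_two_symm.comp
    ((tendsto_mul_sqrt_atTop_of_local_of_decay hpos hθ₀ hcap hloc hdec).comp hrn)
  have hxK : Tendsto (fun n => x n - K n) atTop (𝓝 0) := by
    refine Metric.nhds_basis_closedBall.tendsto_right_iff.2 fun ε hε => ?_
    obtain ⟨Rl, hl⟩ := hloc (ε / (2 * π + √(2 * π))) (by positivity)
    obtain ⟨Rd, hd⟩ := hdec (ε / (2 * π + √(2 * π))) (by positivity)
    filter_upwards [hrn.eventually_ge_atTop Rl, hrn.eventually_ge_atTop Rd,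
      hrn.eventually_ge_atTop r₀, hrn.eventually (hcap.eventually_gt_atTop 0), hA]
      with n hrl hrd hr₀ hB hAn
    obtain ⟨ht, htπ⟩ := hθ₀ _ hr₀
    rw [Metric.mem_closedBall, dist_zero_right, norm_eq_abs]
    refine (abs_coeff_mul_pow_sub_integral_gaussian_le hf (hpos _ hr₀) hB ht.le htπ.le
      (fun θ hθ => hAn ▸ hl _ hrl θ hθ) (hd _ hrd)).trans_eq ?_
    field_simp
  have hx : Tendsto x atTop (𝓝 √(2 * π)) := by simpa using hxK.add hK
  convert hx.mul_const (√(2 * π) / (2 * π)) using 1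
  · ext n
    simp only [x, sqrt_mul (by positivity : (0 : ℝ) ≤ 2 * π)]
    field_simp
  · rw [mul_div_assoc', mul_self_sqrt (by positivity), div_self (by positivity)]

theorem stmt_11_general (coef : ℕ → ℝ) (f : ℂ → ℂ)
    (hf : ∀ z : ℂ, HasSum (fun n : ℕ => (coef n : ℂ) * z ^ n) (f z))
    (fr : ℝ → ℝ) (hfrsum : ∀ r : ℝ, HasSum (fun n : ℕ => coef n * r ^ n) (fr r))
    (r₀ : ℝ) (hpos : ∀ r : ℝ, r₀ ≤ r → 0 < fr r)
    (A B : ℝ → ℝ)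
    (hA : ∀ r : ℝ, A r = r * deriv fr r / fr r)
    (hB : ∀ r : ℝ, B r = r * deriv A r)
    (hcap : Tendsto B atTop atTop)
    (θ₀ : ℝ → ℝ) (hθ₀ : ∀ r : ℝ, r₀ ≤ r → 0 < θ₀ r ∧ θ₀ r < π)
    (hloc : ∀ ε : ℝ, 0 < ε → ∃ R : ℝ, ∀ r : ℝ, R ≤ r → ∀ θ : ℝ, |θ| ≤ θ₀ r →
      ‖f ((r : ℂ) * Complex.exp ((θ : ℂ) * Complex.I)) *
          Complex.exp (((-(θ * A r) : ℝ) : ℂ) * Complex.I + ((θ ^ 2 * B r / 2 : ℝ) : ℂ)) /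
          ((fr r : ℝ) : ℂ) - 1‖ ≤ ε)
    (hdec : ∀ ε : ℝ, 0 < ε → ∃ R : ℝ, ∀ r : ℝ, R ≤ r → ∀ θ : ℝ, θ₀ r ≤ |θ| → |θ| ≤ π →
      Real.sqrt (B r) * ‖f ((r : ℂ) * Complex.exp ((θ : ℂ) * Complex.I))‖ / fr r ≤ ε) :
    ∃ (N : ℕ) (rn : ℕ → ℝ),
      (∀ n : ℕ, N ≤ n →
        r₀ < rn n ∧ A (rn n) = n ∧ ∀ r : ℝ, r₀ < r → A r = n → r = rn n) ∧
      Tendsto rn atTop atTop ∧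
      Tendsto (fun n : ℕ =>
          coef n * rn n ^ n * Real.sqrt (2 * π * B (rn n)) / fr (rn n))
        atTop (nhds 1) := by
  have hfr : AnalyticOnNhd ℝ fr univ := fun x _ =>
    (hasFPowerSeriesOnBall_ofScalars_of_forall_hasSum hfrsum).analyticAt_of_mem (by simp)
  have hAd : ∀ r, r₀ ≤ r → DifferentiableAt ℝ A r := fun r hr => by
    rw [funext hA]
    exact (differentiableAt_id.mul (hfr.deriv r trivial).differentiableAt).div
      (hfr r trivial).differentiableAt (hpos r hr).ne'
  obtain ⟨R₁, hR₁⟩ := eventually_atTop.1 (hcap.eventually_ge_atTop 1)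
  set R := max R₁ (max r₀ 1)
  have hlog : MonotoneOn (fun x => A x - log x) (Ici R) :=
    monotoneOn_sub_log_of_one_le_mul_deriv (by positivity)
      (fun x hx => hAd x ((le_max_left _ _).trans ((le_max_right _ _).trans hx)))
      (fun x hx => hB x ▸ hR₁ x ((le_max_left _ _).trans hx))
  obtain ⟨N, rn, hrn, hrn_top⟩ := exists_seq_eq_natCast_of_strictMonoOn
    ((le_max_left _ _).trans (le_max_right _ _))
    (fun x hx => (hAd x hx).continuousAt.continuousWithinAt)
    (strictMonoOn_of_monotoneOn_sub_log (by positivity) hlog)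
    (tendsto_atTop_of_monotoneOn_sub_log hlog)
  refine ⟨N, rn, hrn, hrn_top, tendsto_coeff_mul_pow_mul_sqrt_div
    (hasFPowerSeriesOnBall_ofScalars_of_forall_hasSum hf) hpos hθ₀ hcap hloc hdec hrn_top ?_⟩
  filter_upwards [eventually_ge_atTop N] with n hn using (hrn n hn).2.1

/-- Hayman's Stirling-type formula for `H`-admissible entire functions. -/
theorem stmt_11 (coef : ℕ → ℝ) (f : ℂ → ℂ)
    (hf : ∀ z : ℂ, HasSum (fun n : ℕ => (coef n : ℂ) * z ^ n) (f z))
    (fr : ℝ → ℝ) (hfrsum : ∀ r : ℝ, HasSum (fun n : ℕ => coef n * r ^ n) (fr r))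
    (r₀ : ℝ) (hr₀ : 0 < r₀) (hpos : ∀ r : ℝ, r₀ ≤ r → 0 < fr r)
    (A B : ℝ → ℝ)
    (hA : ∀ r : ℝ, A r = r * deriv fr r / fr r)
    (hB : ∀ r : ℝ, B r = r * deriv A r)
    (hcap : Tendsto B atTop atTop)
    (θ₀ : ℝ → ℝ) (hθ₀ : ∀ r : ℝ, r₀ ≤ r → 0 < θ₀ r ∧ θ₀ r < π)
    (hloc : ∀ ε : ℝ, 0 < ε → ∃ R : ℝ, ∀ r : ℝ, R ≤ r → ∀ θ : ℝ, |θ| ≤ θ₀ r →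
      ‖f ((r : ℂ) * Complex.exp ((θ : ℂ) * Complex.I)) *
          Complex.exp (((-(θ * A r) : ℝ) : ℂ) * Complex.I + ((θ ^ 2 * B r / 2 : ℝ) : ℂ)) /
          ((fr r : ℝ) : ℂ) - 1‖ ≤ ε)
    (hdec : ∀ ε : ℝ, 0 < ε → ∃ R : ℝ, ∀ r : ℝ, R ≤ r → ∀ θ : ℝ, θ₀ r ≤ |θ| → |θ| ≤ π →
      Real.sqrt (B r) * ‖f ((r : ℂ) * Complex.exp ((θ : ℂ) * Complex.I))‖ / fr r ≤ ε) :
    ∃ (N : ℕ) (rn : ℕ → ℝ),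
      (∀ n : ℕ, N ≤ n →
        r₀ < rn n ∧ A (rn n) = n ∧ ∀ r : ℝ, r₀ < r → A r = n → r = rn n) ∧
      Tendsto rn atTop atTop ∧
      Tendsto (fun n : ℕ =>
          coef n * rn n ^ n * Real.sqrt (2 * π * B (rn n)) / fr (rn n))
        atTop (nhds 1) :=
  stmt_11_general coef f hf fr hfrsum r₀ hpos A B hA hB hcap θ₀ hθ₀ hloc hdec
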